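/- arXiv:1701.01713 — 2 statements merged into one kernel-verified Lean document; each statement's English description precedes it below -/
import Mathlib

section
/- Let k and l be real numbers and let h : ℝ → ℝ be the degree-8 polynomial function defined in the context. Then h(1) = (2k+1)·(4k+2l+1)·(k-l)·(2k+l)². Consequently, if k and l are positive integers with k < l, then h(1) < 0. -/
theorem factored_groebner_h_one_neg {k l : ℝ} (hk : 0 ≤ k) (hkl : k < l) :
    (2*k+1)*(4*k+2*l+1)*(k-l)*(2*k+l)^2 < 0 := by
  have hl : 0 < l := hk.trans_lt hkl
  exact mul_neg_of_neg_of_pos (mul_neg_of_pos_of_neg (by positivity) (sub_neg.2 hkl))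
    (by positivity)

/-- Value at `1` of the degree-8 Gröbner-basis polynomial `h` arising from the
Einstein equations for `Ad(Sp(k)×Sp(k)×Sp(l))`-invariant metrics on `Sp(2k+l)`:
`h(1) = (2k+1)(4k+2l+1)(k-l)(2k+l)²` for all real `k, l`; consequently
`h(1) < 0` when `k` and `l` are positive integers with `k < l`. -/
theorem groebner_h_at_one (k l : ℝ) (h : ℝ → ℝ)
    (hh : ∀ y : ℝ, h y =
      2*l^2*(l+k)*(4*k^2+4*k*l+2*l^2+l) * y^8
      - 4*l^2*(2*k+l+1)*(8*k^2+8*k*l+2*l^2+l) * y^7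
      + l*(64*k^4+304*k^3*l+284*k^2*l^2+88*k*l^3+4*l^4+40*k^3+238*k^2*l
          +162*k*l^2+32*l^3+8*k^2+51*k*l+19*l^2+2*l) * y^6
      - 8*l*(2*k+l+1)*(28*k^3+40*k^2*l+10*k*l^2+14*k^2+21*k*l+4*l^2+2*k+2*l) * y^5
      + (128*k^5+1376*k^4*l+1472*k^3*l^2+468*k^2*l^3+24*k*l^4+160*k^4+1684*k^3*l
          +1372*k^2*l^2+336*k*l^3+8*l^4+82*k^3+713*k^2*l+406*k*l^2+60*l^3
          +20*k^2+118*k*l+38*l^2+2*k+5*l) * y^4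
      - 4*(2*k+l+1)*(96*k^4+248*k^3*l+62*k^2*l^2+92*k^3+215*k^2*l+46*k*l^2
          +32*k^2+55*k*l+8*l^2+4*k+4*l) * y^3
      + (1792*k^5+2432*k^4*l+848*k^3*l^2+36*k^2*l^3+2848*k^4+3100*k^3*l
          +896*k^2*l^2+24*k*l^3+1714*k^3+1427*k^2*l+304*k*l^2+4*l^3+478*k^2
          +278*k*l+32*l^2+58*k+19*l+2) * y^2
      - 4*(5*k+1)*(2*k+1)*(3*k+1)*(2*k+l+1)*(8*k+2*l+1) * y
      + 2*(2*k+1)^2*(5*k+1)^2*(4*k+2*l+1)) :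
    h 1 = (2*k+1)*(4*k+2*l+1)*(k-l)*(2*k+l)^2 ∧
    ((∃ m : ℕ, 0 < m ∧ k = m) → (∃ n : ℕ, 0 < n ∧ l = n) → k < l → h 1 < 0) := by
  have h_one : h 1 = (2*k+1)*(4*k+2*l+1)*(k-l)*(2*k+l)^2 := by
    rw [hh 1]
    ring
  refine ⟨h_one, fun ⟨m, _, hk⟩ _ hkl => ?_⟩
  rw [h_one]
  exact factored_groebner_h_one_neg (hk ▸ m.cast_nonneg) hkl
end

section
/- Let k and l be positive integers with k < l and let h : ℝ → ℝ be the degree-8 polynomial function defined in the context. Then h has at least two real roots: there exist real numbers t₁ and t₂ with 0 < t₁ < 1 < t₂ such that h(t₁) = 0 and h(t₂) = 0. -/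
/-!
The polynomial `h` is positive at `0`, negative at `1` and has positive leading coefficient, so
the intermediate value theorem gives a root in `(0, 1)` and another in `(1, ∞)`.  The sign at `1`
is the only real computation: writing `m = l - k`, `-h(1)` is `m` times a polynomial in `k` and
`m` with nonnegative coefficients.
-/

open Polynomial Filter

noncomputable def groebnerH (k l : ℝ) : ℝ[X] :=
  C (2*l^2*(l+k)*(4*k^2+4*k*l+2*l^2+l)) * X^8
  - C (4*l^2*(2*k+l+1)*(8*k^2+8*k*l+2*l^2+l)) * X^7
  + C (l*(64*k^4+304*k^3*l+284*k^2*l^2+88*k*l^3+4*l^4+40*k^3+238*k^2*l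
      +162*k*l^2+32*l^3+8*k^2+51*k*l+19*l^2+2*l)) * X^6
  - C (8*l*(2*k+l+1)*(28*k^3+40*k^2*l+10*k*l^2+14*k^2+21*k*l+4*l^2+2*k+2*l)) * X^5
  + C (128*k^5+1376*k^4*l+1472*k^3*l^2+468*k^2*l^3+24*k*l^4+160*k^4+1684*k^3*l
      +1372*k^2*l^2+336*k*l^3+8*l^4+82*k^3+713*k^2*l+406*k*l^2+60*l^3
      +20*k^2+118*k*l+38*l^2+2*k+5*l) * X^4
  - C (4*(2*k+l+1)*(96*k^4+248*k^3*l+62*k^2*l^2+92*k^3+215*k^2*l+46*k*l^2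
      +32*k^2+55*k*l+8*l^2+4*k+4*l)) * X^3
  + C (1792*k^5+2432*k^4*l+848*k^3*l^2+36*k^2*l^3+2848*k^4+3100*k^3*l
      +896*k^2*l^2+24*k*l^3+1714*k^3+1427*k^2*l+304*k*l^2+4*l^3+478*k^2
      +278*k*l+32*l^2+58*k+19*l+2) * X^2
  - C (4*(5*k+1)*(2*k+1)*(3*k+1)*(2*k+l+1)*(8*k+2*l+1)) * X
  + C (2*(2*k+1)^2*(5*k+1)^2*(4*k+2*l+1))

namespace groebnerH

variable {k l : ℝ}

theorem eval_zero (k l : ℝ) :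
    (groebnerH k l).eval 0 = 2*(2*k+1)^2*(5*k+1)^2*(4*k+2*l+1) := by
  simp [groebnerH]

theorem eval_zero_pos (hk : 0 ≤ k) (hl : 0 ≤ l) : 0 < (groebnerH k l).eval 0 := by
  rw [eval_zero]
  positivity

theorem eval_one_add (k m : ℝ) :
    (groebnerH k (k + m)).eval 1 = -(m * (2*m^3 + m^2 + 4*k*m^3 + 20*k*m^2 + 6*k*m
      + 36*k^2*m^2 + 66*k^2*m + 9*k^2 + 108*k^3*m + 72*k^3 + 108*k^4)) := by
  simp only [groebnerH, eval_add, eval_sub, eval_mul, eval_pow, eval_C, eval_X]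
  ring

theorem eval_one_neg (hk : 0 ≤ k) (hkl : k < l) : (groebnerH k l).eval 1 < 0 := by
  obtain ⟨m, hm, rfl⟩ : ∃ m, 0 < m ∧ l = k + m := ⟨l - k, sub_pos.mpr hkl, by ring⟩
  rw [eval_one_add, neg_neg_iff_pos]
  positivity

theorem natDegree_eq (hk : 0 ≤ k) (hl : 0 < l) : (groebnerH k l).natDegree = 8 := by
  unfold groebnerH
  compute_degree!
  refine ⟨⟨?_, ?_⟩, ?_⟩ <;> positivity

theorem leadingCoeff_eq (hk : 0 ≤ k) (hl : 0 < l) :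
    (groebnerH k l).leadingCoeff = 2*l^2*(l+k)*(4*k^2+4*k*l+2*l^2+l) := by
  rw [leadingCoeff, natDegree_eq hk hl, groebnerH]
  simp only [coeff_add, coeff_sub, coeff_C_mul, coeff_X_pow, coeff_X, coeff_C]
  norm_num

theorem tendsto_eval_atTop (hk : 0 ≤ k) (hl : 0 < l) :
    Tendsto (fun y => (groebnerH k l).eval y) atTop atTop := by
  refine tendsto_atTop_of_leadingCoeff_nonneg _ ?_ ?_
  · exact natDegree_pos_iff_degree_pos.mp (by rw [natDegree_eq hk hl]; norm_num)
  · rw [leadingCoeff_eq hk hl]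
    positivity

end groebnerH

theorem groebner_h_two_roots_general (k l : ℕ) (hkl : k < l) (h : ℝ → ℝ)
    (hh : ∀ y : ℝ, h y =
      2*l^2*(l+k)*(4*k^2+4*k*l+2*l^2+l) * y^8
      - 4*l^2*(2*k+l+1)*(8*k^2+8*k*l+2*l^2+l) * y^7
      + l*(64*k^4+304*k^3*l+284*k^2*l^2+88*k*l^3+4*l^4+40*k^3+238*k^2*l
          +162*k*l^2+32*l^3+8*k^2+51*k*l+19*l^2+2*l) * y^6
      - 8*l*(2*k+l+1)*(28*k^3+40*k^2*l+10*k*l^2+14*k^2+21*k*l+4*l^2+2*k+2*l) * y^5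
      + (128*k^5+1376*k^4*l+1472*k^3*l^2+468*k^2*l^3+24*k*l^4+160*k^4+1684*k^3*l
          +1372*k^2*l^2+336*k*l^3+8*l^4+82*k^3+713*k^2*l+406*k*l^2+60*l^3
          +20*k^2+118*k*l+38*l^2+2*k+5*l) * y^4
      - 4*(2*k+l+1)*(96*k^4+248*k^3*l+62*k^2*l^2+92*k^3+215*k^2*l+46*k*l^2
          +32*k^2+55*k*l+8*l^2+4*k+4*l) * y^3
      + (1792*k^5+2432*k^4*l+848*k^3*l^2+36*k^2*l^3+2848*k^4+3100*k^3*l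
          +896*k^2*l^2+24*k*l^3+1714*k^3+1427*k^2*l+304*k*l^2+4*l^3+478*k^2
          +278*k*l+32*l^2+58*k+19*l+2) * y^2
      - 4*(5*k+1)*(2*k+1)*(3*k+1)*(2*k+l+1)*(8*k+2*l+1) * y
      + 2*(2*k+1)^2*(5*k+1)^2*(4*k+2*l+1)) :
    ∃ t₁ t₂ : ℝ, 0 < t₁ ∧ t₁ < 1 ∧ 1 < t₂ ∧ h t₁ = 0 ∧ h t₂ = 0 := by
  have hk : (0 : ℝ) ≤ k := k.cast_nonneg
  have hkl' : (k : ℝ) < l := by exact_mod_cast hkl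
  have hl : (0 : ℝ) < l := hk.trans_lt hkl'
  obtain rfl : h = fun y => (groebnerH k l).eval y := funext fun y => by
    simp only [hh, groebnerH, eval_add, eval_sub, eval_mul, eval_pow, eval_C, eval_X]
  have h₁ := groebnerH.eval_one_neg hk hkl'
  obtain ⟨t₁, ⟨ht₁₀, ht₁₁⟩, ht₁⟩ := intermediate_value_Ioo' zero_le_one
    (groebnerH k l).continuousOn ⟨h₁, groebnerH.eval_zero_pos hk hl.le⟩
  obtain ⟨t₂, ht₂₁, ht₂⟩ := intermediate_value_Ioi (groebnerH k l).continuousOn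
    (groebnerH.tendsto_eval_atTop hk hl) h₁
  exact ⟨t₁, t₂, ht₁₀, ht₁₁, ht₂₁, ht₁, ht₂⟩

/-- For positive integers `k < l`, the degree-8 Gröbner-basis polynomial `h`
arising from the Einstein equations for `Ad(Sp(k)×Sp(k)×Sp(l))`-invariant
metrics on `Sp(2k+l)` has at least two real roots, one in `(0,1)` and one in
`(1,∞)`.  Each such root yields a non-naturally reductive left-invariant
Einstein metric on `Sp(2k+l)`. -/
theorem groebner_h_two_roots (k l : ℕ) (hk : 0 < k) (hkl : k < l) (h : ℝ → ℝ)
    (hh : ∀ y : ℝ, h y =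
      2*l^2*(l+k)*(4*k^2+4*k*l+2*l^2+l) * y^8
      - 4*l^2*(2*k+l+1)*(8*k^2+8*k*l+2*l^2+l) * y^7
      + l*(64*k^4+304*k^3*l+284*k^2*l^2+88*k*l^3+4*l^4+40*k^3+238*k^2*l
          +162*k*l^2+32*l^3+8*k^2+51*k*l+19*l^2+2*l) * y^6
      - 8*l*(2*k+l+1)*(28*k^3+40*k^2*l+10*k*l^2+14*k^2+21*k*l+4*l^2+2*k+2*l) * y^5
      + (128*k^5+1376*k^4*l+1472*k^3*l^2+468*k^2*l^3+24*k*l^4+160*k^4+1684*k^3*l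
          +1372*k^2*l^2+336*k*l^3+8*l^4+82*k^3+713*k^2*l+406*k*l^2+60*l^3
          +20*k^2+118*k*l+38*l^2+2*k+5*l) * y^4
      - 4*(2*k+l+1)*(96*k^4+248*k^3*l+62*k^2*l^2+92*k^3+215*k^2*l+46*k*l^2
          +32*k^2+55*k*l+8*l^2+4*k+4*l) * y^3
      + (1792*k^5+2432*k^4*l+848*k^3*l^2+36*k^2*l^3+2848*k^4+3100*k^3*l
          +896*k^2*l^2+24*k*l^3+1714*k^3+1427*k^2*l+304*k*l^2+4*l^3+478*k^2
          +278*k*l+32*l^2+58*k+19*l+2) * y^2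
      - 4*(5*k+1)*(2*k+1)*(3*k+1)*(2*k+l+1)*(8*k+2*l+1) * y
      + 2*(2*k+1)^2*(5*k+1)^2*(4*k+2*l+1)) :
    ∃ t₁ t₂ : ℝ, 0 < t₁ ∧ t₁ < 1 ∧ 1 < t₂ ∧ h t₁ = 0 ∧ h t₂ = 0 :=
  groebner_h_two_roots_general k l hkl h hh
end
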